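/- Let f : [0,∞) → ℝ be differentiable at x and let x > 0, 0 < α ≤ 1, β > 0. Then the truncated M-fractional derivative of f of order α at x exists and equals D_β^α f(x) = (x^{1-α} / Γ(β+1)) · f'(x), where Γ is the Gamma function. More precisely, the limit as ε → 0 of ( f( x · ∑_{k=0}^{i} (ε x^{-α})^k / Γ(βk+1) ) − f(x) ) / ε exists for each fixed truncation index i ≥ 1 and equals x^{1-α} f'(x) / Γ(β+1). -/

import Mathlib

open Real Filter Topology

/-!
Near `ε = 0` the argument `x · E(ε x^{-α})` is a polynomial in `ε` with value `x` and slope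
`x^{1-α} / Γ(β+1)` (only the `k = 1` term of the truncated Mittag-Leffler sum is linear), so the
difference quotient converges by the chain rule.
-/

/-- `ᵢE_β(z)` in the paper's notation. -/
noncomputable def truncatedMittagLeffler (β : ℝ) (i : ℕ) (z : ℝ) : ℝ :=
  ∑ k ∈ Finset.range (i + 1), z ^ k / Gamma (β * k + 1)

namespace truncatedMittagLeffler

variable (β : ℝ) (i : ℕ)

theorem apply_zero : truncatedMittagLeffler β i 0 = 1 := by
  simp [truncatedMittagLeffler, Finset.sum_range_succ']

theorem hasDerivAt (z : ℝ) :
    HasDerivAt (truncatedMittagLeffler β i)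
      (∑ k ∈ Finset.range (i + 1), k * z ^ (k - 1) / Gamma (β * k + 1)) z :=
  HasDerivAt.fun_sum fun k _ => (hasDerivAt_pow k z).div_const _

theorem hasDerivAt_zero {i : ℕ} (hi : 1 ≤ i) :
    HasDerivAt (truncatedMittagLeffler β i) (1 / Gamma (β + 1)) 0 := by
  convert hasDerivAt β i 0 using 1
  rw [Finset.sum_eq_single_of_mem 1 (Finset.mem_range.2 (by omega))]
  · norm_num
  · intro k _ hk1
    rcases Nat.eq_zero_or_pos k with rfl | hk
    · simp
    · simp [zero_pow (show k - 1 ≠ 0 by omega)]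

end truncatedMittagLeffler

theorem tendsto_truncatedMittagLeffler_slope {f : ℝ → ℝ} {x : ℝ} (hf : DifferentiableAt ℝ f x)
    (β c : ℝ) {i : ℕ} (hi : 1 ≤ i) :
    Tendsto (fun ε => (f (x * truncatedMittagLeffler β i (ε * c)) - f x) / ε) (𝓝[≠] 0)
      (𝓝 (x * c * deriv f x / Gamma (β + 1))) := by
  set g : ℝ → ℝ := fun ε => x * truncatedMittagLeffler β i (ε * c)
  have hg0 : g 0 = x := by simp [g, truncatedMittagLeffler.apply_zero]
  have hg : HasDerivAt g (x * (1 / Gamma (β + 1) * c)) 0 := by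
    have hE := truncatedMittagLeffler.hasDerivAt_zero β hi
    rw [← zero_mul c] at hE
    exact (hE.comp 0 (hasDerivAt_mul_const c)).const_mul x
  have hf' : HasDerivAt f (deriv f x) (g 0) := hg0.symm ▸ hf.hasDerivAt
  have hfg := hasDerivAt_iff_tendsto_slope.mp (hf'.comp 0 hg)
  convert hfg using 2 with ε
  · rw [slope_def_field, Function.comp_apply, Function.comp_apply, hg0, sub_zero]
  · ring

theorem truncated_M_fractional_derivative_general
    (f : ℝ → ℝ) (x α β : ℝ) (i : ℕ)
    (hx : 0 < x) (hi : 1 ≤ i)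
    (hf : DifferentiableAt ℝ f x) :
    Tendsto
      (fun ε : ℝ =>
        (f (x * ∑ k ∈ Finset.range (i + 1),
            (ε * x ^ (-α)) ^ k / Real.Gamma (β * k + 1)) - f x) / ε)
      (𝓝[≠] (0 : ℝ))
      (𝓝 (x ^ (1 - α) * deriv f x / Real.Gamma (β + 1))) := by
  have hpow : x ^ (1 - α) = x * x ^ (-α) := by
    rw [sub_eq_add_neg, rpow_add hx, rpow_one]
  rw [hpow]
  exact tendsto_truncatedMittagLeffler_slope hf β (x ^ (-α)) hi

/-- The truncated M-fractional derivative of a differentiable function exists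
and equals `x^(1-α) * f'(x) / Γ(β+1)`: the limit as `ε → 0` of
`( f( x · ∑_{k=0}^{i} (ε x^{-α})^k / Γ(βk+1) ) − f(x) ) / ε`
exists for each fixed truncation index `i ≥ 1` and equals that value. -/
theorem truncated_M_fractional_derivative
    (f : ℝ → ℝ) (x α β : ℝ) (i : ℕ)
    (hx : 0 < x) (hα0 : 0 < α) (hα1 : α ≤ 1) (hβ : 0 < β) (hi : 1 ≤ i)
    (hf : DifferentiableAt ℝ f x) :
    Tendsto
      (fun ε : ℝ =>
        (f (x * ∑ k ∈ Finset.range (i + 1),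
            (ε * x ^ (-α)) ^ k / Real.Gamma (β * k + 1)) - f x) / ε)
      (𝓝[≠] (0 : ℝ))
      (𝓝 (x ^ (1 - α) * deriv f x / Real.Gamma (β + 1))) :=
  truncated_M_fractional_derivative_general f x α β i hx hi hf
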